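/- Moreover, for any neural network Φ̂ with one hidden layer of K ReLU neurons on a compact connected noisy input space X, and any ε > 0, there exists a sampled network Φ with at most 6K hidden ReLU neurons (weights (x^{(2)}−x^{(1)})/‖x^{(2)}−x^{(1)}‖², biases ⟨w, x^{(1)}⟩ for point pairs in X) such that ‖Φ − Φ̂‖_∞ < ε on X; if X is connected, K neurons suffice. -/

import Mathlib

open Metric

/-- The medial axis of a set `A`: points with at least two distinct nearest points in `A`. -/
def medialAxis {E : Type*} [NormedAddCommGroup E] (A : Set E) : Set E :=
  {z | ∃ p ∈ A, ∃ q ∈ A, p ≠ q ∧ dist p z = infDist z A ∧ dist q z = infDist z A}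

/-- The reach of a set `A`: the infimum over `a ∈ A` of the distance to the medial axis. -/
noncomputable def reach {E : Type*} [NormedAddCommGroup E] (A : Set E) : ℝ :=
  sInf ((fun a => infDist a (medialAxis A)) '' A)

/-- There is a sampled network with `N` hidden ReLU neurons uniformly `ε`-close to `Φhat`
on `X`. -/
def SampledApprox {D : ℕ} (X : Set (EuclideanSpace ℝ (Fin D)))
    (Φhat : EuclideanSpace ℝ (Fin D) → ℝ) (ε : ℝ) (N : ℕ) : Prop :=
  ∃ (x1 x2 : Fin N → EuclideanSpace ℝ (Fin D)) (w2 b2 : Fin N → ℝ),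
    (∀ i, x1 i ∈ X ∧ x2 i ∈ X ∧ x1 i ≠ x2 i) ∧
    ∀ x ∈ X,
      |(∑ i, (w2 i * max ((inner ℝ ((‖x2 i - x1 i‖ ^ 2)⁻¹ • (x2 i - x1 i))
          (x - x1 i) : ℝ)) 0 - b2 i)) - Φhat x| < ε

section helpers
variable {D : ℕ}

lemma inner_unit_self {u : EuclideanSpace ℝ (Fin D)} (hu : ‖u‖ = 1) : (inner ℝ u u : ℝ) = 1 := by
  rw [real_inner_self_eq_norm_sq, hu]; norm_num

lemma sample_eval {u : EuclideanSpace ℝ (Fin D)} (hu : ‖u‖ = 1) (x1 x2 : EuclideanSpace ℝ (Fin D))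
    {s : ℝ} (hs : 0 < s) (h2 : x2 = x1 + s • u) (x : EuclideanSpace ℝ (Fin D)) :
    max ((inner ℝ ((‖x2 - x1‖ ^ 2)⁻¹ • (x2 - x1)) (x - x1) : ℝ)) 0
      = s⁻¹ * max ((inner ℝ u x : ℝ) - (inner ℝ u x1 : ℝ)) 0 := by
  have h21 : x2 - x1 = s • u := by rw [h2]; exact add_sub_cancel_left x1 (s • u)
  have hn : ‖x2 - x1‖ ^ 2 = s ^ 2 := by
    rw [h21, norm_smul, hu, mul_one, Real.norm_eq_abs, sq_abs]
  have hsc : ((‖x2 - x1‖ ^ 2)⁻¹ • (x2 - x1)) = s⁻¹ • u := by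
    rw [hn, h21, smul_smul, sq, mul_inv, inv_mul_cancel_right₀ hs.ne']
  rw [hsc, real_inner_smul_left, inner_sub_right,
    mul_max_of_nonneg _ _ (inv_nonneg.mpr hs.le), mul_zero]

lemma subset_X {X' X : Set (EuclideanSpace ℝ (Fin D))} {εI : ℝ} (hεpos : 0 < εI)
    (hX : X = {x | infDist x X' ≤ εI}) : X' ⊆ X := by
  intro p hp
  rw [hX]
  have := infDist_le_dist_of_mem (x := p) hp
  simp only [dist_self] at this
  exact le_trans this hεpos.le

lemma single_neuron {X' X : Set (EuclideanSpace ℝ (Fin D))} {εI : ℝ} (hεpos : 0 < εI)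
    (hX : X = {x | infDist x X' ≤ εI}) {u : EuclideanSpace ℝ (Fin D)} (hu : ‖u‖ = 1)
    {p : EuclideanSpace ℝ (Fin D)} (hp : p ∈ X') {α : ℝ} (hα1 : -εI ≤ α) (hα2 : α < εI)
    (A B : ℝ) :
    ∃ x1 x2 : EuclideanSpace ℝ (Fin D), ∃ w2 b2 : ℝ, x1 ∈ X ∧ x2 ∈ X ∧ x1 ≠ x2 ∧
      ∀ x : EuclideanSpace ℝ (Fin D),
        w2 * max ((inner ℝ ((‖x2 - x1‖ ^ 2)⁻¹ • (x2 - x1)) (x - x1) : ℝ)) 0 - b2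
          = A * max ((inner ℝ u x : ℝ) - ((inner ℝ u p : ℝ) + α)) 0 - B := by
  have hune : u ≠ 0 := fun h => by simp [h] at hu
  set s : ℝ := εI - α with hs_def
  have hs : 0 < s := by simp [hs_def]; linarith
  refine ⟨p + α • u, p + εI • u, A * s, B, ?_, ?_, ?_, ?_⟩
  · rw [hX]
    refine le_trans (infDist_le_dist_of_mem hp) ?_
    rw [dist_eq_norm, add_sub_cancel_left, norm_smul, hu, mul_one, Real.norm_eq_abs]
    exact abs_le.mpr ⟨hα1, hα2.le⟩
  · rw [hX]
    refine le_trans (infDist_le_dist_of_mem hp) ?_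
    rw [dist_eq_norm, add_sub_cancel_left, norm_smul, hu, mul_one, Real.norm_eq_abs,
      abs_of_pos hεpos]
  · intro h
    have : (α - εI) • u = 0 := by
      have := congrArg (fun z => z - (p + εI • u)) h
      simpa [sub_smul] using this
    rcases smul_eq_zero.mp this with h' | h'
    · have : α = εI := by linarith [sub_eq_zero.mp h']
      exact absurd this hα2.ne
    · exact hune h'
  · intro x
    have h2 : p + εI • u = p + α • u + s • u := by
      rw [add_assoc, ← add_smul]
      congr 1
      simp [hs_def]
    rw [sample_eval hu _ _ hs h2 x]
    have hin : (inner ℝ u (p + α • u) : ℝ) = (inner ℝ u p : ℝ) + α := by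
      rw [inner_add_right, real_inner_smul_right, inner_unit_self hu, mul_one]
    rw [hin]
    have : A * s * (s⁻¹ * max ((inner ℝ u x : ℝ) - ((inner ℝ u p : ℝ) + α)) 0)
        = A * (s * s⁻¹) * max ((inner ℝ u x : ℝ) - ((inner ℝ u p : ℝ) + α)) 0 := by ring
    rw [this, mul_inv_cancel₀ hs.ne', mul_one]

lemma close_point {X' X : Set (EuclideanSpace ℝ (Fin D))} {εI : ℝ}
    (hne : X'.Nonempty) (hcomp : IsCompact X')
    (hX : X = {x | infDist x X' ≤ εI}) {x : EuclideanSpace ℝ (Fin D)} (hx : x ∈ X)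
    {u : EuclideanSpace ℝ (Fin D)} (hu : ‖u‖ = 1) :
    ∃ y ∈ X', |(inner ℝ u x : ℝ) - (inner ℝ u y : ℝ)| ≤ εI := by
  obtain ⟨y, hy, hdy⟩ := hcomp.exists_infDist_eq_dist hne x
  refine ⟨y, hy, ?_⟩
  have hle : dist x y ≤ εI := by rw [← hdy]; rw [hX] at hx; exact hx
  calc |(inner ℝ u x : ℝ) - (inner ℝ u y : ℝ)| = |(inner ℝ u (x - y) : ℝ)| := by rw [inner_sub_right]
    _ ≤ ‖u‖ * ‖x - y‖ := abs_real_inner_le_norm u (x - y)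
    _ = dist x y := by rw [hu, one_mul, dist_eq_norm]
    _ ≤ εI := hle


lemma one_or_gap {X' X : Set (EuclideanSpace ℝ (Fin D))} {εI : ℝ}
    (hne : X'.Nonempty) (hcomp : IsCompact X') (hεpos : 0 < εI)
    (hX : X = {x | infDist x X' ≤ εI})
    {u : EuclideanSpace ℝ (Fin D)} (hu : ‖u‖ = 1) (a b β : ℝ) :
    (∃ x1 x2 : EuclideanSpace ℝ (Fin D), ∃ w2 b2 : ℝ, x1 ∈ X ∧ x2 ∈ X ∧ x1 ≠ x2 ∧
        ∀ x ∈ X, w2 * max ((inner ℝ ((‖x2 - x1‖ ^ 2)⁻¹ • (x2 - x1)) (x - x1) : ℝ)) 0 - b2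
          = a * max ((inner ℝ u x : ℝ) - b) 0 - β)
    ∨ (∃ glo ghi : ℝ, glo ≤ b ∧ b < ghi ∧
        (∃ p0 ∈ X', ghi = (inner ℝ u p0 : ℝ) - εI) ∧
        (∃ p1 ∈ X', glo = (inner ℝ u p1 : ℝ) + εI) ∧
        ∀ x ∈ X, (inner ℝ u x : ℝ) ≤ glo ∨ ghi ≤ (inner ℝ u x : ℝ)) := by
  have hcont : Continuous fun q : EuclideanSpace ℝ (Fin D) => (inner ℝ u q : ℝ) :=
    continuous_const.inner continuous_id
  by_cases hc2 : ∃ p ∈ X', (inner ℝ u p : ℝ) - εI ≤ b ∧ b < (inner ℝ u p : ℝ) + εI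
  · -- kink attainable: exact single neuron
    obtain ⟨p, hp, hb1, hb2⟩ := hc2
    obtain ⟨x1, x2, w2, b2, m1, m2, m3, heq⟩ :=
      single_neuron hεpos hX hu hp (α := b - (inner ℝ u p : ℝ))
        (by linarith) (by linarith) a β
    left
    refine ⟨x1, x2, w2, b2, m1, m2, m3, fun x _ => ?_⟩
    rw [heq x]
    have hpb : (inner ℝ u p : ℝ) + (b - (inner ℝ u p : ℝ)) = b := by ring
    rw [hpb]
  · have hd : ∀ p ∈ X', b < (inner ℝ u p : ℝ) - εI ∨ (inner ℝ u p : ℝ) + εI ≤ b := by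
      push_neg at hc2
      intro p hp
      rcases lt_or_ge b ((inner ℝ u p : ℝ) - εI) with h | h
      · exact Or.inl h
      · exact Or.inr (hc2 p hp h)
    by_cases hup : ∃ p ∈ X', b < (inner ℝ u p : ℝ) - εI
    · by_cases hdown : ∃ p ∈ X', (inner ℝ u p : ℝ) + εI ≤ b
      · -- gap case
        right
        obtain ⟨pa, hpa, hpa'⟩ := hup
        obtain ⟨pb, hpb, hpb'⟩ := hdown
        set f := fun q : EuclideanSpace ℝ (Fin D) => (inner ℝ u q : ℝ) with hf
        have hSp : IsCompact (X' ∩ f ⁻¹' Set.Ici (b + εI)) :=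
          hcomp.inter_right (isClosed_Ici.preimage hcont)
        have hSm : IsCompact (X' ∩ f ⁻¹' Set.Iic (b - εI)) :=
          hcomp.inter_right (isClosed_Iic.preimage hcont)
        obtain ⟨p0, hp0, hmin⟩ := hSp.exists_isMinOn
          ⟨pa, hpa, by simp only [Set.mem_preimage, Set.mem_Ici]; show b + εI ≤ f pa; linarith⟩
          hcont.continuousOn
        obtain ⟨p1, hp1, hmax⟩ := hSm.exists_isMaxOn
          ⟨pb, hpb, by simp only [Set.mem_preimage, Set.mem_Iic]; show f pb ≤ b - εI; linarith⟩
          hcont.continuousOn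
        have hp0X' : p0 ∈ X' := hp0.1
        have hp1X' : p1 ∈ X' := hp1.1
        have hp0m : b + εI ≤ f p0 := hp0.2
        have hp1m : f p1 ≤ b - εI := hp1.2
        have hghi : b < f p0 - εI := by
          rcases hd p0 hp0X' with h | h
          · exact h
          · exfalso; linarith
        refine ⟨f p1 + εI, f p0 - εI, by linarith, hghi, ⟨p0, hp0X', rfl⟩, ⟨p1, hp1X', rfl⟩, ?_⟩
        intro x hx
        obtain ⟨y, hy, hxy⟩ := close_point hne hcomp hX hx hu
        have habs := abs_le.mp hxy
        rcases hd y hy with h | h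
        · right
          have hyS : y ∈ X' ∩ f ⁻¹' Set.Ici (b + εI) :=
            ⟨hy, by simp only [Set.mem_preimage, Set.mem_Ici]; show b + εI ≤ f y; linarith⟩
          have hm := isMinOn_iff.mp hmin y hyS
          show f p0 - εI ≤ f x
          have h1 : -εI ≤ f x - f y := habs.1
          linarith
        · left
          have hyS : y ∈ X' ∩ f ⁻¹' Set.Iic (b - εI) :=
            ⟨hy, by simp only [Set.mem_preimage, Set.mem_Iic]; show f y ≤ b - εI; linarith⟩
          have hm := isMaxOn_iff.mp hmax y hyS
          show f x ≤ f p1 + εI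
          have h1 : f x - f y ≤ εI := habs.2
          linarith
      · -- linear case: everything above
        left
        have hall : ∀ p ∈ X', b < (inner ℝ u p : ℝ) - εI := by
          intro p hp
          rcases hd p hp with h | h
          · exact h
          · exact absurd ⟨p, hp, h⟩ hdown
        obtain ⟨p0, hp0, hmin⟩ := hcomp.exists_isMinOn hne hcont.continuousOn
        set g : ℝ := (inner ℝ u p0 : ℝ) - εI with hg
        have hgb : b < g := hall p0 hp0
        obtain ⟨x1, x2, w2, b2, m1, m2, m3, heq⟩ :=
          single_neuron hεpos hX hu hp0 (α := -εI) le_rfl (by linarith) a (β - a * (g - b))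
        refine ⟨x1, x2, w2, b2, m1, m2, m3, fun x hx => ?_⟩
        rw [heq x]
        have hxg : g ≤ (inner ℝ u x : ℝ) := by
          obtain ⟨y, hy, hxy⟩ := close_point hne hcomp hX hx hu
          have h1 := isMinOn_iff.mp hmin y hy
          have habs := abs_le.mp hxy
          have h2 : -εI ≤ (inner ℝ u x : ℝ) - (inner ℝ u y : ℝ) := habs.1
          rw [hg]
          linarith
        have h1 : max ((inner ℝ u x : ℝ) - ((inner ℝ u p0 : ℝ) + -εI)) 0 = (inner ℝ u x : ℝ) - g := by
          rw [max_eq_left]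
          · rw [hg]; ring
          · rw [hg] at hxg; linarith
        have h2 : max ((inner ℝ u x : ℝ) - b) 0 = (inner ℝ u x : ℝ) - b :=
          max_eq_left (by linarith)
        rw [h1, h2]
        ring
    · -- zero case: everything below
      left
      obtain ⟨p, hp⟩ := id hne
      obtain ⟨x1, x2, w2, b2, m1, m2, m3, heq⟩ :=
        single_neuron hεpos hX hu hp (α := 0) (by linarith) hεpos 0 β
      refine ⟨x1, x2, w2, b2, m1, m2, m3, fun x hx => ?_⟩
      have hxb : (inner ℝ u x : ℝ) ≤ b := by
        obtain ⟨y, hy, hxy⟩ := close_point hne hcomp hX hx hu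
        have habs := abs_le.mp hxy
        rcases hd y hy with h | h
        · exact absurd ⟨y, hy, h⟩ hup
        · have h2 : (inner ℝ u x : ℝ) - (inner ℝ u y : ℝ) ≤ εI := habs.2
          linarith
      rw [heq x, zero_mul,
        max_eq_right (by linarith : (inner ℝ u x : ℝ) - b ≤ 0), mul_zero]


lemma no_gap_of_connected {X' X : Set (EuclideanSpace ℝ (Fin D))} {εI : ℝ} (hεpos : 0 < εI)
    (hX : X = {x | infDist x X' ≤ εI}) {u : EuclideanSpace ℝ (Fin D)}
    {glo ghi b : ℝ} (h1 : glo ≤ b) (h2 : b < ghi)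
    (hp0 : ∃ p0 ∈ X', ghi = (inner ℝ u p0 : ℝ) - εI)
    (hp1 : ∃ p1 ∈ X', glo = (inner ℝ u p1 : ℝ) + εI)
    (hdich : ∀ x ∈ X, (inner ℝ u x : ℝ) ≤ glo ∨ ghi ≤ (inner ℝ u x : ℝ))
    (hconn : IsConnected X) : False := by
  have hcont : Continuous fun q : EuclideanSpace ℝ (Fin D) => (inner ℝ u q : ℝ) :=
    continuous_const.inner continuous_id
  obtain ⟨p0, hp0', hgh⟩ := hp0
  obtain ⟨p1, hp1', hgl⟩ := hp1
  have hp0X : p0 ∈ X := subset_X hεpos hX hp0'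
  have hp1X : p1 ∈ X := subset_X hεpos hX hp1'
  set mid : ℝ := (glo + ghi) / 2 with hmid
  have hmem : mid ∈ Set.Icc ((inner ℝ u p1 : ℝ)) ((inner ℝ u p0 : ℝ)) := by
    constructor
    · have : (inner ℝ u p1 : ℝ) = glo - εI := by linarith
      rw [this]; rw [hmid]; linarith
    · have : (inner ℝ u p0 : ℝ) = ghi + εI := by linarith
      rw [this]; rw [hmid]; linarith
  have := hconn.isPreconnected.intermediate_value hp1X hp0X hcont.continuousOn hmem
  obtain ⟨x, hxX, hfx⟩ := this
  have hfx' : (inner ℝ u x : ℝ) = mid := hfx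
  rcases hdich x hxX with h | h <;> rw [hfx', hmid] at h <;> linarith

lemma gap_three {X' X : Set (EuclideanSpace ℝ (Fin D))} {εI : ℝ} (hεpos : 0 < εI)
    (hX : X = {x | infDist x X' ≤ εI}) {u : EuclideanSpace ℝ (Fin D)} (hu : ‖u‖ = 1)
    (a b β : ℝ) {glo ghi : ℝ} (h1 : glo ≤ b) (h2 : b < ghi)
    (hp0 : ∃ p0 ∈ X', ghi = (inner ℝ u p0 : ℝ) - εI)
    (hp1 : ∃ p1 ∈ X', glo = (inner ℝ u p1 : ℝ) + εI)
    (hdich : ∀ x ∈ X, (inner ℝ u x : ℝ) ≤ glo ∨ ghi ≤ (inner ℝ u x : ℝ))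
    {η : ℝ} (hη : 0 < η) :
    ∃ (x1 x2 : Fin 3 → EuclideanSpace ℝ (Fin D)) (w2 b2 : Fin 3 → ℝ),
      (∀ j, x1 j ∈ X ∧ x2 j ∈ X ∧ x1 j ≠ x2 j) ∧
      ∀ x ∈ X,
        |(∑ j, (w2 j * max ((inner ℝ ((‖x2 j - x1 j‖ ^ 2)⁻¹ • (x2 j - x1 j))
            (x - x1 j) : ℝ)) 0 - b2 j)) - (a * max ((inner ℝ u x : ℝ) - b) 0 - β)| ≤ η := by
  obtain ⟨p0, hp0', hgh⟩ := hp0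
  obtain ⟨p1, hp1', hgl⟩ := hp1
  set δ : ℝ := min εI (η / (|a| + 1)) with hδdef
  have hapos : (0:ℝ) < |a| + 1 := by positivity
  have hδpos : 0 < δ := lt_min hεpos (by positivity)
  have hδεI : δ ≤ εI := min_le_left _ _
  have hδη : δ ≤ η / (|a| + 1) := min_le_right _ _
  have hden : 0 < ghi - glo + δ := by linarith
  set M : ℝ := (ghi - b) / (ghi - glo + δ) with hMdef
  have hM0 : 0 ≤ M := div_nonneg (by linarith) hden.le
  have hM1 : M ≤ 1 := by
    rw [hMdef, div_le_one hden]; linarith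
  have hMden : M * (ghi - glo + δ) = ghi - b := div_mul_cancel₀ _ hden.ne'
  -- neuron 0 : kink ghi, coefficient a, constant β
  obtain ⟨y1, y2, v2, c2, m1, m2, m3, heq0⟩ :=
    single_neuron hεpos hX hu hp0' (α := -εI) le_rfl (by linarith) a β
  -- neuron 1 : kink glo - δ, coefficient a * M, constant 0
  obtain ⟨z1, z2, w2', c2', n1, n2, n3, heq1⟩ :=
    single_neuron hεpos hX hu hp1' (α := εI - δ) (by linarith) (by linarith) (a * M) 0
  -- neuron 2 : kink ghi, coefficient -(a*M), constant 0
  obtain ⟨t1, t2, s2, d2, k1, k2, k3, heq2⟩ :=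
    single_neuron hεpos hX hu hp0' (α := -εI) le_rfl (by linarith) (-(a * M)) 0
  refine ⟨![y1, z1, t1], ![y2, z2, t2], ![v2, w2', s2], ![c2, c2', d2], ?_, ?_⟩
  · intro j
    fin_cases j
    · exact ⟨m1, m2, m3⟩
    · exact ⟨n1, n2, n3⟩
    · exact ⟨k1, k2, k3⟩
  · intro x hx
    rw [Fin.sum_univ_three]
    simp only [Matrix.cons_val_zero, Matrix.cons_val_one, Matrix.head_cons,
      Matrix.cons_val_two, Matrix.tail_cons]
    rw [heq0 x, heq1 x, heq2 x]
    have hk0 : (inner ℝ u p0 : ℝ) + -εI = ghi := by rw [hgh]; ring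
    have hk1 : (inner ℝ u p1 : ℝ) + (εI - δ) = glo - δ := by rw [hgl] at *; ring
    rw [hk0, hk1]
    set t : ℝ := (inner ℝ u x : ℝ) with ht
    rcases hdich x hx with hc | hc
    · -- t ≤ glo
      have e0 : max (t - ghi) 0 = 0 := max_eq_right (by linarith)
      have e1 : max (t - b) 0 = 0 := max_eq_right (by linarith)
      rw [e0, e1]
      have hbound : max (t - (glo - δ)) 0 ≤ δ := max_le (by linarith) hδpos.le
      have hbound0 : 0 ≤ max (t - (glo - δ)) 0 := le_max_right _ _
      have hsimp : a * 0 - β + (a * M * max (t - (glo - δ)) 0 - 0) + (-(a * M) * 0 - 0)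
          - (a * 0 - β) = a * M * max (t - (glo - δ)) 0 := by ring
      rw [hsimp, abs_mul, abs_mul, abs_of_nonneg hM0, abs_of_nonneg hbound0]
      calc |a| * M * max (t - (glo - δ)) 0 ≤ |a| * 1 * δ := by
            apply mul_le_mul (mul_le_mul le_rfl hM1 hM0 (abs_nonneg a)) hbound hbound0
            positivity
        _ = |a| * δ := by ring
        _ ≤ |a| * (η / (|a| + 1)) := by
            apply mul_le_mul le_rfl hδη hδpos.le (abs_nonneg a)
        _ ≤ η := by
            rw [div_eq_mul_inv, ← mul_assoc]
            rw [← div_eq_mul_inv (|a| * η) (|a| + 1), div_le_iff₀ hapos]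
            nlinarith [abs_nonneg a, hη.le]
    · -- ghi ≤ t
      have e0 : max (t - ghi) 0 = t - ghi := max_eq_left (by linarith)
      have e1 : max (t - b) 0 = t - b := max_eq_left (by linarith)
      have e2 : max (t - (glo - δ)) 0 = t - (glo - δ) := max_eq_left (by linarith)
      rw [e0, e1, e2]
      have : a * (t - ghi) - β + (a * M * (t - (glo - δ)) - 0) + (-(a * M) * (t - ghi) - 0)
          - (a * (t - b) - β) = a * (M * (ghi - glo + δ) - (ghi - b)) := by ring
      rw [this, hMden, sub_self, mul_zero, abs_zero]
      exact hη.le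


lemma three_neuron {X' X : Set (EuclideanSpace ℝ (Fin D))} {εI : ℝ}
    (hne : X'.Nonempty) (hcomp : IsCompact X') (hεpos : 0 < εI)
    (hX : X = {x | infDist x X' ≤ εI})
    {u : EuclideanSpace ℝ (Fin D)} (hu : ‖u‖ = 1) (a b β : ℝ) {η : ℝ} (hη : 0 < η) :
    ∃ (x1 x2 : Fin 3 → EuclideanSpace ℝ (Fin D)) (w2 b2 : Fin 3 → ℝ),
      (∀ j, x1 j ∈ X ∧ x2 j ∈ X ∧ x1 j ≠ x2 j) ∧
      ∀ x ∈ X,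
        |(∑ j, (w2 j * max ((inner ℝ ((‖x2 j - x1 j‖ ^ 2)⁻¹ • (x2 j - x1 j))
            (x - x1 j) : ℝ)) 0 - b2 j)) - (a * max ((inner ℝ u x : ℝ) - b) 0 - β)| ≤ η := by
  rcases one_or_gap hne hcomp hεpos hX hu a b β with
    ⟨y1, y2, v2, c2, m1, m2, m3, heq⟩ | ⟨glo, ghi, h1, h2, hp0, hp1, hdich⟩
  · refine ⟨![y1, y1, y1], ![y2, y2, y2], ![v2, 0, 0], ![c2, 0, 0], ?_, ?_⟩
    · intro j; fin_cases j <;> exact ⟨m1, m2, m3⟩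
    · intro x hx
      rw [Fin.sum_univ_three]
      simp only [Matrix.cons_val_zero, Matrix.cons_val_one, Matrix.head_cons,
        Matrix.cons_val_two, Matrix.tail_cons]
      rw [heq x hx]
      simp [hη.le]
  · exact gap_three hεpos hX hu a b β h1 h2 hp0 hp1 hdich hη


end helpers

theorem sampled_network_emulates_shallow_network {D K : ℕ}
    (X' X : Set (EuclideanSpace ℝ (Fin D)))
    (hne : X'.Nonempty) (hcomp : IsCompact X')
    (τ εI : ℝ) (hτ : reach X' = τ) (hεpos : 0 < εI) (hεlt : εI < min τ 1)
    (hX : X = {x | infDist x X' ≤ εI})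
    (what1 : Fin K → EuclideanSpace ℝ (Fin D)) (hwhat1 : ∀ i, what1 i ≠ 0)
    (what2 bhat1 bhat2 : Fin K → ℝ)
    (Φhat : EuclideanSpace ℝ (Fin D) → ℝ)
    (hΦhat : ∀ x, Φhat x = ∑ i, (what2 i * max ((inner ℝ (what1 i) x : ℝ) - bhat1 i) 0 - bhat2 i))
    (ε : ℝ) (hε : 0 < ε) :
    (∃ N ≤ 6 * K, SampledApprox X Φhat ε N) ∧
      (IsConnected X → ∃ N ≤ K, SampledApprox X Φhat ε N) := by
  classical
  by_cases hK : K = 0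
  · subst hK
    have hzero : SampledApprox X Φhat ε 0 := by
      refine ⟨finZeroElim, finZeroElim, finZeroElim, finZeroElim, fun i => i.elim0, ?_⟩
      intro x hx
      rw [hΦhat x]
      simpa using hε
    exact ⟨⟨0, by norm_num, hzero⟩, fun _ => ⟨0, le_rfl, hzero⟩⟩
  · have hKpos : 0 < (K : ℝ) := by positivity
    set u : Fin K → EuclideanSpace ℝ (Fin D) := fun i => ‖what1 i‖⁻¹ • what1 i with hudef
    have hr : ∀ i, (0:ℝ) < ‖what1 i‖ := fun i => norm_pos_iff.mpr (hwhat1 i)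
    have hu : ∀ i, ‖u i‖ = 1 := fun i => norm_smul_inv_norm (hwhat1 i)
    set A : Fin K → ℝ := fun i => what2 i * ‖what1 i‖ with hAdef
    set B : Fin K → ℝ := fun i => bhat1 i / ‖what1 i‖ with hBdef
    have htar : ∀ (i : Fin K) (x : EuclideanSpace ℝ (Fin D)),
        A i * max ((inner ℝ (u i) x : ℝ) - B i) 0 - bhat2 i
          = what2 i * max ((inner ℝ (what1 i) x : ℝ) - bhat1 i) 0 - bhat2 i := by
      intro i x
      have h1 : (inner ℝ (u i) x : ℝ) = ‖what1 i‖⁻¹ * (inner ℝ (what1 i) x : ℝ) := by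
        rw [hudef]; exact real_inner_smul_left _ _ _
      have h2 : (inner ℝ (u i) x : ℝ) - B i
          = ‖what1 i‖⁻¹ * ((inner ℝ (what1 i) x : ℝ) - bhat1 i) := by
        rw [h1, hBdef, mul_sub]
        congr 1
        field_simp
      have h4 : max (‖what1 i‖⁻¹ * ((inner ℝ (what1 i) x : ℝ) - bhat1 i)) 0
          = ‖what1 i‖⁻¹ * max ((inner ℝ (what1 i) x : ℝ) - bhat1 i) 0 := by
        rw [mul_max_of_nonneg _ _ (inv_nonneg.mpr (hr i).le), mul_zero]
      rw [h2, h4, hAdef]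
      have h3 : what2 i * ‖what1 i‖ * (‖what1 i‖⁻¹ * max ((inner ℝ (what1 i) x : ℝ) - bhat1 i) 0)
          = what2 i * ((‖what1 i‖ * ‖what1 i‖⁻¹) * max ((inner ℝ (what1 i) x : ℝ) - bhat1 i) 0) := by
        ring
      rw [h3, mul_inv_cancel₀ (hr i).ne', one_mul]
    constructor
    · -- 6K part : 3K neurons
      have key3 : ∀ i : Fin K, ∃ (y1 y2 : Fin 3 → EuclideanSpace ℝ (Fin D)) (v2 c2 : Fin 3 → ℝ),
          (∀ j, y1 j ∈ X ∧ y2 j ∈ X ∧ y1 j ≠ y2 j) ∧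
          ∀ x ∈ X,
            |(∑ j, (v2 j * max ((inner ℝ ((‖y2 j - y1 j‖ ^ 2)⁻¹ • (y2 j - y1 j))
                (x - y1 j) : ℝ)) 0 - c2 j))
              - (what2 i * max ((inner ℝ (what1 i) x : ℝ) - bhat1 i) 0 - bhat2 i)| ≤ ε / (2 * K) := by
        intro i
        obtain ⟨y1, y2, v2, c2, hval, happ⟩ :=
          three_neuron hne hcomp hεpos hX (hu i) (A i) (B i) (bhat2 i)
            (η := ε / (2 * K)) (by positivity)
        refine ⟨y1, y2, v2, c2, hval, fun x hx => ?_⟩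
        rw [← htar i x]
        exact happ x hx
      choose y1 y2 v2 c2 hval happ using key3
      refine ⟨3 * K, by omega, ?_⟩
      set e : Fin 3 × Fin K ≃ Fin (3 * K) := finProdFinEquiv with hedef
      refine ⟨fun k => y1 (e.symm k).2 (e.symm k).1, fun k => y2 (e.symm k).2 (e.symm k).1,
        fun k => v2 (e.symm k).2 (e.symm k).1, fun k => c2 (e.symm k).2 (e.symm k).1,
        fun k => hval (e.symm k).2 (e.symm k).1, ?_⟩
      intro x hx
      have hsum : (∑ k : Fin (3 * K),
            (v2 (e.symm k).2 (e.symm k).1 *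
              max ((inner ℝ ((‖y2 (e.symm k).2 (e.symm k).1 - y1 (e.symm k).2 (e.symm k).1‖ ^ 2)⁻¹
                  • (y2 (e.symm k).2 (e.symm k).1 - y1 (e.symm k).2 (e.symm k).1))
                (x - y1 (e.symm k).2 (e.symm k).1) : ℝ)) 0 - c2 (e.symm k).2 (e.symm k).1))
          = ∑ i : Fin K, ∑ j : Fin 3,
              (v2 i j * max ((inner ℝ ((‖y2 i j - y1 i j‖ ^ 2)⁻¹ • (y2 i j - y1 i j))
                (x - y1 i j) : ℝ)) 0 - c2 i j) := by
        calc (∑ k : Fin (3 * K),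
            (v2 (e.symm k).2 (e.symm k).1 *
              max ((inner ℝ ((‖y2 (e.symm k).2 (e.symm k).1 - y1 (e.symm k).2 (e.symm k).1‖ ^ 2)⁻¹
                  • (y2 (e.symm k).2 (e.symm k).1 - y1 (e.symm k).2 (e.symm k).1))
                (x - y1 (e.symm k).2 (e.symm k).1) : ℝ)) 0 - c2 (e.symm k).2 (e.symm k).1))
            = ∑ p : Fin 3 × Fin K,
              (v2 p.2 p.1 * max ((inner ℝ ((‖y2 p.2 p.1 - y1 p.2 p.1‖ ^ 2)⁻¹
                  • (y2 p.2 p.1 - y1 p.2 p.1)) (x - y1 p.2 p.1) : ℝ)) 0 - c2 p.2 p.1) :=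
              Equiv.sum_comp e.symm (fun p : Fin 3 × Fin K =>
                v2 p.2 p.1 * max ((inner ℝ ((‖y2 p.2 p.1 - y1 p.2 p.1‖ ^ 2)⁻¹
                  • (y2 p.2 p.1 - y1 p.2 p.1)) (x - y1 p.2 p.1) : ℝ)) 0 - c2 p.2 p.1)
          _ = ∑ j : Fin 3, ∑ i : Fin K,
              (v2 i j * max ((inner ℝ ((‖y2 i j - y1 i j‖ ^ 2)⁻¹ • (y2 i j - y1 i j))
                (x - y1 i j) : ℝ)) 0 - c2 i j) := Fintype.sum_prod_type _
          _ = _ := Finset.sum_comm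
      rw [hsum, hΦhat x, ← Finset.sum_sub_distrib]
      calc |∑ i : Fin K, ((∑ j, (v2 i j * max ((inner ℝ ((‖y2 i j - y1 i j‖ ^ 2)⁻¹ •
                (y2 i j - y1 i j)) (x - y1 i j) : ℝ)) 0 - c2 i j))
              - (what2 i * max ((inner ℝ (what1 i) x : ℝ) - bhat1 i) 0 - bhat2 i))|
          ≤ ∑ i : Fin K, |(∑ j, (v2 i j * max ((inner ℝ ((‖y2 i j - y1 i j‖ ^ 2)⁻¹ •
                (y2 i j - y1 i j)) (x - y1 i j) : ℝ)) 0 - c2 i j))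
              - (what2 i * max ((inner ℝ (what1 i) x : ℝ) - bhat1 i) 0 - bhat2 i)| :=
            Finset.abs_sum_le_sum_abs _ _
        _ ≤ ∑ _i : Fin K, ε / (2 * K) := Finset.sum_le_sum (fun i _ => happ i x hx)
        _ = K * (ε / (2 * K)) := by
            rw [Finset.sum_const, Finset.card_univ, Fintype.card_fin, nsmul_eq_mul]
        _ = ε / 2 := by field_simp
        _ < ε := half_lt_self hε
    · -- connected part : K neurons, exact
      intro hconn
      have key : ∀ i : Fin K, ∃ p1 p2 : EuclideanSpace ℝ (Fin D), ∃ w2 b2 : ℝ,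
          p1 ∈ X ∧ p2 ∈ X ∧ p1 ≠ p2 ∧
          ∀ x ∈ X, w2 * max ((inner ℝ ((‖p2 - p1‖ ^ 2)⁻¹ • (p2 - p1)) (x - p1) : ℝ)) 0 - b2
            = what2 i * max ((inner ℝ (what1 i) x : ℝ) - bhat1 i) 0 - bhat2 i := by
        intro i
        rcases one_or_gap hne hcomp hεpos hX (hu i) (A i) (B i) (bhat2 i) with
          ⟨p1, p2, w2, b2, m1, m2, m3, heq⟩ | ⟨glo, ghi, h1, h2, hp0, hp1, hdich⟩
        · exact ⟨p1, p2, w2, b2, m1, m2, m3,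
            fun x hx => (heq x hx).trans (htar i x)⟩
        · exact absurd hconn (fun hc =>
            no_gap_of_connected hεpos hX h1 h2 hp0 hp1 hdich hc)
      choose p1 p2 w2 b2 m1 m2 m3 heq using key
      refine ⟨K, le_rfl, p1, p2, w2, b2, fun i => ⟨m1 i, m2 i, m3 i⟩, ?_⟩
      intro x hx
      rw [hΦhat x, Finset.sum_congr rfl (fun i _ => heq i x hx)]
      simpa using hε
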